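/- Let R > 0 and let f : [R,∞) → ℝ be a C¹ function with ∫_R^∞ |f'(r)|² r³ dr < ∞ and lim_{r→∞} f(r) = 0. Define π_R f(r) = R²·f(R)/r² and π_R^⊥ f(r) = f(r) − R²·f(R)/r² for r ≥ R. Then ∫_R^∞ (d/dr)(π_R^⊥f)(r) · (d/dr)(r^{-2}) · r³ dr = 0; consequently ∫_R^∞ |f'(r)|² r³ dr = ∫_R^∞ |(π_R^⊥f)'(r)|² r³ dr + ∫_R^∞ |(π_R f)'(r)|² r³ dr. -/

import Mathlib

open MeasureTheory Filter Set

/-!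
Since `(r⁻²)' = -2 r⁻³`, the weight `r³` turns each integrand into a combination of `f'`,
`r⁻³` and `f'² r³`. Over `(R, ∞)` the first integrates to `-f(R)` (as `f → 0` at infinity) and
the second to `1 / (2R²)`; the coefficient `R² f(R)` of the projection is exactly the one that
makes the orthogonality integral vanish. `f'` is integrable because `|f'| ≤ f'² r³ + r⁻³`.
-/

theorem integrableOn_Ioi_inv_pow {R : ℝ} (hR : 0 < R) {n : ℕ} (hn : 1 < n) :
    IntegrableOn (fun r : ℝ => (r ^ n)⁻¹) (Ioi R) := by
  have hn' : (-n : ℝ) < -1 := by exact_mod_cast (by omega : -(n : ℤ) < -1)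
  refine (integrableOn_Ioi_rpow_of_lt hn' hR).congr_fun (fun r hr => ?_) measurableSet_Ioi
  simp [Real.rpow_neg (hR.trans hr).le]

theorem integral_Ioi_inv_pow {R : ℝ} (hR : 0 < R) {n : ℕ} (hn : 1 < n) :
    ∫ r in Ioi R, (r ^ n)⁻¹ = (R ^ (n - 1))⁻¹ / (n - 1) := by
  have hn' : (-n : ℝ) < -1 := by exact_mod_cast (by omega : -(n : ℤ) < -1)
  calc ∫ r in Ioi R, (r ^ n)⁻¹ = ∫ r in Ioi R, r ^ (-n : ℝ) :=
        setIntegral_congr_fun measurableSet_Ioi fun r hr => by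
          simp [Real.rpow_neg (hR.trans hr).le]
    _ = (R ^ (n - 1))⁻¹ / (n - 1) := by
      have hexp : (-n : ℝ) + 1 = -((n - 1 : ℕ) : ℝ) := by push_cast [Nat.cast_sub hn.le]; ring
      rw [integral_Ioi_rpow_of_lt hn' hR, hexp,
        Real.rpow_neg hR.le, Real.rpow_natCast, div_neg, neg_div, neg_neg,
        Nat.cast_sub hn.le, Nat.cast_one]

theorem IntegrableOn.of_sq_mul {α : Type*} [MeasurableSpace α] {μ : Measure α} {s : Set α}
    {g w : α → ℝ} (hs : MeasurableSet s) (hg : AEStronglyMeasurable g (μ.restrict s))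
    (hw : ∀ x ∈ s, 0 < w x) (hgw : IntegrableOn (fun x => g x ^ 2 * w x) s μ)
    (hw_inv : IntegrableOn (fun x => (w x)⁻¹) s μ) : IntegrableOn g s μ := by
  refine (hgw.add hw_inv).mono' hg ((ae_restrict_iff' hs).2 (.of_forall fun x hx => ?_))
  have hwx := hw x hx
  rw [Real.norm_eq_abs, Pi.add_apply, ← sub_nonneg]
  have : g x ^ 2 * w x + (w x)⁻¹ - |g x| = ((|g x| * w x - 1) ^ 2 + |g x| * w x) / w x := by
    field_simp
    rw [← sq_abs (g x)]
    ring
  rw [this]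
  positivity

theorem hasDerivAt_inv_sq {r : ℝ} (hr : r ≠ 0) :
    HasDerivAt (fun ρ : ℝ => (ρ ^ 2)⁻¹) (-2 * (r ^ 3)⁻¹) r :=
  ((hasDerivAt_pow 2 r).inv (pow_ne_zero 2 hr)).congr_deriv (by field_simp; ring)

theorem hasDerivAt_const_div_sq (c : ℝ) {r : ℝ} (hr : r ≠ 0) :
    HasDerivAt (fun ρ : ℝ => c / ρ ^ 2) (-2 * c * (r ^ 3)⁻¹) r := by
  simpa only [div_eq_mul_inv, mul_left_comm c, mul_assoc] using (hasDerivAt_inv_sq hr).const_mul c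

theorem deriv_sub_const_div_sq {f : ℝ → ℝ} (c : ℝ) {r : ℝ} (hf : DifferentiableAt ℝ f r)
    (hr : r ≠ 0) :
    deriv (fun ρ => f ρ - c / ρ ^ 2) r = deriv f r + 2 * c * (r ^ 3)⁻¹ := by
  rw [(hf.hasDerivAt.fun_sub (hasDerivAt_const_div_sq c hr)).deriv]
  ring

section ExteriorProjection

variable {f : ℝ → ℝ} {R : ℝ} (hR : 0 < R) (hdiff : ∀ r ∈ Ioi R, DifferentiableAt ℝ f r)
  (hf' : IntegrableOn (deriv f) (Ioi R)) (hf'_integral : ∫ r in Ioi R, deriv f r = -f R)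
include hR hdiff hf' hf'_integral

theorem integral_deriv_sub_proj_mul_deriv_inv_sq :
    ∫ r in Ioi R,
        deriv (fun ρ => f ρ - R ^ 2 * f R / ρ ^ 2) r * deriv (fun ρ : ℝ => (ρ ^ 2)⁻¹) r * r ^ 3
      = 0 := by
  set c := R ^ 2 * f R
  calc _ = ∫ r in Ioi R, (-2 * deriv f r + -4 * c * (r ^ 3)⁻¹) :=
        setIntegral_congr_fun measurableSet_Ioi fun r hr => by
          have hr0 : r ≠ 0 := (hR.trans hr).ne'
          rw [deriv_sub_const_div_sq c (hdiff r hr) hr0, (hasDerivAt_inv_sq hr0).deriv]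
          field_simp
          ring
    _ = 0 := by
      rw [integral_add (hf'.const_mul _) ((integrableOn_Ioi_inv_pow hR (by norm_num)).const_mul _),
        integral_const_mul, integral_const_mul, hf'_integral, integral_Ioi_inv_pow hR (by norm_num)]
      field_simp
      ring

theorem integral_sq_deriv_eq_add (hint : IntegrableOn (fun r => deriv f r ^ 2 * r ^ 3) (Ioi R)) :
    ∫ r in Ioi R, deriv f r ^ 2 * r ^ 3
      = (∫ r in Ioi R, deriv (fun ρ => f ρ - R ^ 2 * f R / ρ ^ 2) r ^ 2 * r ^ 3)
        + ∫ r in Ioi R, deriv (fun ρ => R ^ 2 * f R / ρ ^ 2) r ^ 2 * r ^ 3 := by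
  set c := R ^ 2 * f R
  have hinv := integrableOn_Ioi_inv_pow hR (n := 3) (by norm_num)
  have hperp : ∫ r in Ioi R, deriv (fun ρ => f ρ - c / ρ ^ 2) r ^ 2 * r ^ 3
      = ∫ r in Ioi R, (deriv f r ^ 2 * r ^ 3 + (4 * c * deriv f r + 4 * c ^ 2 * (r ^ 3)⁻¹)) :=
    setIntegral_congr_fun measurableSet_Ioi fun r hr => by
      have hr0 : r ≠ 0 := (hR.trans hr).ne'
      rw [deriv_sub_const_div_sq c (hdiff r hr) hr0]
      field_simp
      ring
  have hproj : ∫ r in Ioi R, deriv (fun ρ => c / ρ ^ 2) r ^ 2 * r ^ 3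
      = ∫ r in Ioi R, 4 * c ^ 2 * (r ^ 3)⁻¹ :=
    setIntegral_congr_fun measurableSet_Ioi fun r hr => by
      have hr0 : r ≠ 0 := (hR.trans hr).ne'
      rw [(hasDerivAt_const_div_sq c hr0).deriv]
      field_simp
      ring
  have hcross : IntegrableOn (fun r => 4 * c * deriv f r + 4 * c ^ 2 * (r ^ 3)⁻¹) (Ioi R) :=
    (hf'.const_mul _).add (hinv.const_mul _)
  rw [hperp, hproj, integral_add hint hcross,
    integral_add (hf'.const_mul _) (hinv.const_mul _), integral_const_mul, integral_const_mul,
    hf'_integral, integral_Ioi_inv_pow hR (by norm_num)]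
  field_simp
  ring

end ExteriorProjection

/-- the explicit formula `π_R f(r) = R²f(R)/r²` realizes the
`Ḣ¹((R,∞))`-orthogonal projection onto the span of `1/r²`: the complementary part
`π_R^⊥ f` is `Ḣ¹`-orthogonal to `1/r²`, and the exterior `Ḣ¹`-energy decomposes. -/
theorem stmt3 (R : ℝ) (hR : 0 < R) (f : ℝ → ℝ)
    (hf : ContDiffOn ℝ 1 f (Ici R))
    (hint : IntegrableOn (fun r => (deriv f r) ^ 2 * r ^ 3) (Ioi R))
    (hlim : Tendsto f atTop (nhds 0)) :
    (∫ r in Ioi R,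
        deriv (fun ρ => f ρ - R ^ 2 * f R / ρ ^ 2) r * deriv (fun ρ : ℝ => (ρ ^ 2)⁻¹) r * r ^ 3)
      = 0 ∧
    (∫ r in Ioi R, (deriv f r) ^ 2 * r ^ 3)
      = (∫ r in Ioi R, (deriv (fun ρ => f ρ - R ^ 2 * f R / ρ ^ 2) r) ^ 2 * r ^ 3)
        + ∫ r in Ioi R, (deriv (fun ρ => R ^ 2 * f R / ρ ^ 2) r) ^ 2 * r ^ 3 := by
  have hdiff : ∀ r ∈ Ioi R, DifferentiableAt ℝ f r := fun r hr =>
    (hf.contDiffAt (Ici_mem_nhds hr)).differentiableAt one_ne_zero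
  have hf' : IntegrableOn (deriv f) (Ioi R) :=
    IntegrableOn.of_sq_mul measurableSet_Ioi (measurable_deriv f).aestronglyMeasurable
      (fun r hr => pow_pos (hR.trans hr) 3) hint (integrableOn_Ioi_inv_pow hR (by norm_num))
  have hf'_integral : ∫ r in Ioi R, deriv f r = -f R := by
    simpa using integral_Ioi_of_hasDerivAt_of_tendsto (hf.continuousOn.continuousWithinAt
      self_mem_Ici) (fun r hr => (hdiff r hr).hasDerivAt) hf' hlim
  exact ⟨integral_deriv_sub_proj_mul_deriv_inv_sq hR hdiff hf' hf'_integral,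
    integral_sq_deriv_eq_add hR hdiff hf' hf'_integral hint⟩
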